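/- arXiv:2110.11909 — 4 statements merged into one kernel-verified Lean document; each statement's English description precedes it below -/
import Mathlib

section
/- For all a > 0 and t > 0, (1/π) ∫₀^∞ e^{−t x} sin(a √x) dx = (a / (2 √π t^{3/2})) · e^{−a² / (4t)}. -/
/-!
Substituting `x = u²` turns the integral into `2 ∫₀^∞ u e^{-tu²} sin(au) du`. Since
`u e^{-tu²}` is the derivative of `-e^{-tu²} / (2t)`, integrating by parts gives
`(a / t) ∫₀^∞ e^{-tu²} cos(au) du`, and by evenness this is `a / (2t)` times the Fourier
transform of the Gaussian, `√(π / t) e^{-a² / (4t)}`.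
-/

open MeasureTheory Real Set Filter Topology

section Gaussian

variable (a : ℝ) {t : ℝ}

lemma integrable_exp_neg_mul_sq_mul_cos (ht : 0 < t) :
    Integrable fun x : ℝ ↦ exp (-t * x ^ 2) * cos (a * x) :=
  (integrable_exp_neg_mul_sq ht).mul_bdd (by fun_prop : Continuous _).aestronglyMeasurable
    (ae_of_all _ fun x ↦ (norm_eq_abs _).trans_le (abs_cos_le_one _))

lemma integrable_mul_exp_neg_mul_sq_mul_sin (ht : 0 < t) :
    Integrable fun x : ℝ ↦ x * exp (-t * x ^ 2) * sin (a * x) :=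
  (integrable_mul_exp_neg_mul_sq ht).mul_bdd (by fun_prop : Continuous _).aestronglyMeasurable
    (ae_of_all _ fun x ↦ (norm_eq_abs _).trans_le (abs_sin_le_one _))

lemma integral_exp_neg_mul_sq_mul_cos (ht : 0 < t) :
    ∫ x : ℝ, exp (-t * x ^ 2) * cos (a * x) = √(π / t) * exp (-a ^ 2 / (4 * t)) := by
  have hre : ∀ x : ℝ, (Complex.exp (Complex.I * a * x) * Complex.exp (-t * x ^ 2)).re =
      exp (-t * x ^ 2) * cos (a * x) := fun x ↦ by
    rw [← Complex.exp_add, Complex.exp_re]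
    simp [← Complex.ofReal_pow, mul_comm]
  have hint :
      Integrable fun x : ℝ ↦ Complex.exp (Complex.I * a * x) * Complex.exp (-t * x ^ 2) := by
    simpa [← Complex.exp_add, add_comm, mul_comm] using
      integrable_cexp_quadratic (b := t) (by simpa using ht) (Complex.I * a) 0
  have h := congrArg Complex.re (fourierIntegral_gaussian (b := t) (by simpa using ht) a)
  rw [← RCLike.re_to_complex, ← integral_re hint] at h
  simp only [RCLike.re_to_complex, hre] at h
  have hsqrt : ((π / t : ℝ) : ℂ) ^ (1 / 2 : ℂ) = ((√(π / t) : ℝ) : ℂ) := by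
    rw [sqrt_eq_rpow, Complex.ofReal_cpow (by positivity)]
    norm_num
  rw [h, ← Complex.ofReal_div, hsqrt]
  norm_cast

lemma integral_Ioi_exp_neg_mul_sq_mul_cos (ht : 0 < t) :
    ∫ x in Ioi 0, exp (-t * x ^ 2) * cos (a * x) = √(π / t) * exp (-a ^ 2 / (4 * t)) / 2 := by
  have h := integral_comp_abs (f := fun x ↦ exp (-t * x ^ 2) * cos (a * x))
  have heven : ∀ x : ℝ, cos (a * |x|) = cos (a * x) := fun x ↦ by
    rcases abs_choice x with hx | hx <;> simp [hx]
  simp only [sq_abs, heven, integral_exp_neg_mul_sq_mul_cos a ht] at h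
  linarith

lemma integral_Ioi_mul_exp_neg_mul_sq_mul_sin (ht : 0 < t) :
    ∫ x in Ioi 0, x * exp (-t * x ^ 2) * sin (a * x) =
      a / (2 * t) * ∫ x in Ioi 0, exp (-t * x ^ 2) * cos (a * x) := by
  have hu : ∀ x ∈ Ioi (0 : ℝ), HasDerivAt (fun x ↦ exp (-t * x ^ 2))
      (-(2 * t) * (x * exp (-t * x ^ 2))) x := fun x _ ↦ by
    convert ((hasDerivAt_pow 2 x).const_mul (-t)).exp using 1; ring
  have hv : ∀ x ∈ Ioi (0 : ℝ), HasDerivAt (fun x ↦ sin (a * x)) (a * cos (a * x)) x :=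
    fun x _ ↦ by simpa [mul_comm] using ((hasDerivAt_id x).const_mul a).sin
  have hzero : Tendsto (fun x ↦ exp (-t * x ^ 2) * sin (a * x)) (𝓝[>] 0) (𝓝 0) := by
    have hcont : Continuous fun x ↦ exp (-t * x ^ 2) * sin (a * x) := by fun_prop
    simpa using (hcont.tendsto 0).mono_left nhdsWithin_le_nhds
  have hinfty : Tendsto (fun x ↦ exp (-t * x ^ 2) * sin (a * x)) atTop (𝓝 0) := by
    refine Tendsto.zero_mul_isBoundedUnder_le ?_ ?_
    · exact tendsto_exp_atBot.comp
        ((tendsto_pow_atTop two_ne_zero).const_mul_atTop_of_neg (neg_lt_zero.mpr ht))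
    · exact isBoundedUnder_of ⟨1, fun x ↦ by simpa using abs_sin_le_one (a * x)⟩
  have hcos := (integrable_exp_neg_mul_sq_mul_cos a ht).integrableOn (s := Ioi 0)
  have hsin := (integrable_mul_exp_neg_mul_sq_mul_sin a ht).integrableOn (s := Ioi 0)
  have h := integral_Ioi_mul_deriv_eq_deriv_mul hu hv
    ((hcos.const_mul a).congr (ae_of_all _ fun x ↦ by simp only [Pi.mul_apply]; ring))
    ((hsin.const_mul (-(2 * t))).congr (ae_of_all _ fun x ↦ by simp only [Pi.mul_apply]; ring))
    hzero hinfty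
  simp only [mul_left_comm _ a, mul_assoc, integral_const_mul] at h
  rw [div_mul_eq_mul_div, h, eq_div_iff (by positivity)]
  simp only [mul_assoc]
  ring

end Gaussian

lemma integral_Ioi_comp_sq {E : Type*} [NormedAddCommGroup E] [NormedSpace ℝ E] (g : ℝ → E) :
    ∫ x in Ioi 0, (2 * x) • g (x ^ 2) = ∫ y in Ioi 0, g y := by
  rw [← integral_comp_rpow_Ioi_of_pos (g := g) two_pos]
  norm_num

lemma integral_Ioi_exp_neg_mul_mul_sin_sqrt (a t : ℝ) :
    ∫ y in Ioi 0, exp (-t * y) * sin (a * √y) =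
      2 * ∫ x in Ioi 0, x * exp (-t * x ^ 2) * sin (a * x) := by
  rw [← integral_Ioi_comp_sq, ← integral_const_mul]
  refine setIntegral_congr_fun measurableSet_Ioi fun x hx ↦ ?_
  rw [smul_eq_mul, sqrt_sq (le_of_lt hx)]
  ring

theorem stmt_1_general (a t : ℝ) (ht : 0 < t) :
    (1 / Real.pi) * ∫ x in Set.Ioi (0 : ℝ), Real.exp (-t * x) * Real.sin (a * Real.sqrt x) =
      (a / (2 * Real.sqrt Real.pi * t ^ ((3 : ℝ) / 2))) * Real.exp (-a ^ 2 / (4 * t)) := by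
  have h32 : t ^ ((3 : ℝ) / 2) = t * √t := by
    rw [show (3 : ℝ) / 2 = 1 + 1 / 2 by norm_num, rpow_add ht, rpow_one, sqrt_eq_rpow]
  rw [integral_Ioi_exp_neg_mul_mul_sin_sqrt, integral_Ioi_mul_exp_neg_mul_sq_mul_sin a ht,
    integral_Ioi_exp_neg_mul_sq_mul_cos a ht, sqrt_div pi_pos.le, h32]
  have hπ : √π ^ 2 = π := sq_sqrt pi_pos.le
  field_simp
  rw [hπ]
  ring

theorem stmt_1 (a t : ℝ) (ha : 0 < a) (ht : 0 < t) :
    (1 / Real.pi) * ∫ x in Set.Ioi (0 : ℝ), Real.exp (-t * x) * Real.sin (a * Real.sqrt x) =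
      (a / (2 * Real.sqrt Real.pi * t ^ ((3 : ℝ) / 2))) * Real.exp (-a ^ 2 / (4 * t)) :=
  stmt_1_general a t ht
end

section
/- For all a > 0 and s > 0, ∫₀^∞ e^{−s t} · (a / (2 √π t^{3/2})) e^{−a²/(4t)} dt = e^{−a √s}. -/
/-!
Completing the square gives `(a / (2√t) ± b√t)² = a² / (4t) + b²t ± ab`, so with `b = √s` the
function `-(e^{-ab} erf (a / (2√t) - b√t) + e^{ab} erf (a / (2√t) + b√t)) / 2` is a primitive
of `e^{-st} a / (2√π t^{3/2}) e^{-a²/(4t)}` on `(0, ∞)`. Its limit is `-(e^{-ab} + e^{ab}) / 2`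
as `t → 0⁺` and `(e^{-ab} - e^{ab}) / 2` as `t → ∞`, and the difference is `e^{-ab}`.
-/

open MeasureTheory Real Filter Set Topology

theorem integral_Ioi_of_hasDerivAt_of_nonneg_of_tendsto {f f' : ℝ → ℝ} {a l₀ l : ℝ}
    (hderiv : ∀ x ∈ Ioi a, HasDerivAt f (f' x) x) (hnonneg : ∀ x ∈ Ioi a, 0 ≤ f' x)
    (hleft : Tendsto f (𝓝[>] a) (𝓝 l₀)) (hright : Tendsto f atTop (𝓝 l)) :
    ∫ x in Ioi a, f' x = l - l₀ := by
  rw [← Ici_sdiff_left] at hleft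
  have h := integral_Ioi_of_hasDerivAt_of_nonneg (continuousWithinAt_update_same.mpr hleft)
    (fun x hx => (hderiv x hx).congr_of_eventuallyEq ?_) hnonneg (hright.congr' ?_)
  · rwa [Function.update_self] at h
  · filter_upwards [eventually_ne_nhds (ne_of_gt hx)] with y hy using Function.update_of_ne hy _ _
  · filter_upwards [eventually_ne_atTop a] with x hx using (Function.update_of_ne hx _ _).symm

noncomputable def erf (x : ℝ) : ℝ := 2 / √π * ∫ u in (0 : ℝ)..x, exp (-u ^ 2)

theorem hasDerivAt_erf (x : ℝ) : HasDerivAt erf (2 / √π * exp (-x ^ 2)) x := by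
  have hcont : Continuous fun u : ℝ => exp (-u ^ 2) := by fun_prop
  exact (intervalIntegral.integral_hasDerivAt_right (hcont.intervalIntegrable _ _)
    (hcont.stronglyMeasurableAtFilter _ _) hcont.continuousAt).const_mul _

theorem erf_neg (x : ℝ) : erf (-x) = -erf x := by
  have h := intervalIntegral.integral_comp_neg (a := 0) (b := x) fun u : ℝ => exp (-u ^ 2)
  simp only [neg_sq, neg_zero] at h
  rw [erf, erf, intervalIntegral.integral_symm, ← h]
  ring

theorem tendsto_erf_atTop : Tendsto erf atTop (𝓝 1) := by
  have hint : Integrable fun u : ℝ => exp (-u ^ 2) := by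
    simpa using integrable_exp_neg_mul_sq one_pos
  have hhalf : ∫ u in Ioi (0 : ℝ), exp (-u ^ 2) = √π / 2 := by
    simpa using integral_gaussian_Ioi 1
  have h := (intervalIntegral_tendsto_integral_Ioi 0 hint.integrableOn tendsto_id).const_mul
    (2 / √π)
  rwa [hhalf, div_mul_div_cancel₀ (sqrt_pos.2 pi_pos).ne', div_self two_ne_zero] at h

theorem tendsto_erf_atBot : Tendsto erf atBot (𝓝 (-1)) := by
  simpa [Function.comp_def, erf_neg] using tendsto_erf_atTop.neg.comp tendsto_neg_atBot_atTop

noncomputable def erfTerm (a c t : ℝ) : ℝ := exp (a * c) * erf (a / (2 * √t) + c * √t)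

section

variable {a c t : ℝ}

theorem sq_div_two_sqrt_add_mul_sqrt (ht : 0 < t) :
    (a / (2 * √t) + c * √t) ^ 2 = a ^ 2 / (4 * t) + c ^ 2 * t + a * c := by
  obtain ⟨r, hr, rfl⟩ : ∃ r, 0 < r ∧ t = r ^ 2 := ⟨√t, sqrt_pos.2 ht, (sq_sqrt ht.le).symm⟩
  rw [sqrt_sq hr.le]
  field_simp
  ring

theorem hasDerivAt_div_two_sqrt_add_mul_sqrt (ht : 0 < t) :
    HasDerivAt (fun t => a / (2 * √t) + c * √t) (c / (2 * √t) - a / (4 * t * √t)) t := by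
  obtain ⟨r, hr, rfl⟩ : ∃ r, 0 < r ∧ t = r ^ 2 := ⟨√t, sqrt_pos.2 ht, (sq_sqrt ht.le).symm⟩
  have hsqrt := hasDerivAt_sqrt ht.ne'
  refine (((hasDerivAt_const _ a).div (hsqrt.const_mul 2) ?_).add
    (hsqrt.const_mul c)).congr_deriv ?_
  all_goals rw [sqrt_sq hr.le]
  · positivity
  · field_simp
    ring

theorem tendsto_div_two_sqrt_add_mul_sqrt_nhdsGT (ha : 0 < a) (c : ℝ) :
    Tendsto (fun t => a / (2 * √t) + c * √t) (𝓝[>] 0) atTop := by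
  have hinv : Tendsto (fun t => a / 2 * √t⁻¹) (𝓝[>] 0) atTop :=
    (tendsto_sqrt_atTop.comp tendsto_inv_nhdsGT_zero).const_mul_atTop (half_pos ha)
  have hsqrt : Tendsto (fun t => c * √t) (𝓝[>] 0) (𝓝 0) := by
    simpa using ((continuous_sqrt.tendsto 0).mono_left nhdsWithin_le_nhds).const_mul c
  refine (hinv.atTop_add hsqrt).congr fun t => ?_
  rw [sqrt_inv]
  ring

theorem tendsto_div_two_sqrt_atTop (a : ℝ) : Tendsto (fun t => a / (2 * √t)) atTop (𝓝 0) := by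
  have h := (tendsto_inv_atTop_zero.comp tendsto_sqrt_atTop).const_mul (a / 2)
  rw [mul_zero] at h
  refine h.congr fun t => ?_
  simp only [Function.comp_apply]
  ring

theorem hasDerivAt_erfTerm (ht : 0 < t) :
    HasDerivAt (erfTerm a c)
      (2 / √π * (exp (-c ^ 2 * t) * exp (-a ^ 2 / (4 * t))) *
        (c / (2 * √t) - a / (4 * t * √t))) t := by
  refine (((hasDerivAt_erf _).comp t (hasDerivAt_div_two_sqrt_add_mul_sqrt ht)).const_mul
    (exp (a * c))).congr_deriv ?_
  rw [sq_div_two_sqrt_add_mul_sqrt ht, ← exp_add]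
  have hcancel : exp (a * c) * exp (-(a ^ 2 / (4 * t) + c ^ 2 * t + a * c)) =
      exp (-c ^ 2 * t + -a ^ 2 / (4 * t)) := by
    rw [← exp_add]; congr 1; ring
  rw [← hcancel]
  ring

theorem tendsto_erfTerm_nhdsGT (ha : 0 < a) (c : ℝ) :
    Tendsto (erfTerm a c) (𝓝[>] 0) (𝓝 (exp (a * c))) := by
  have h := (tendsto_erf_atTop.comp (tendsto_div_two_sqrt_add_mul_sqrt_nhdsGT ha c)).const_mul
    (exp (a * c))
  rwa [mul_one] at h

theorem tendsto_erfTerm_atTop_of_pos (a : ℝ) (hc : 0 < c) :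
    Tendsto (erfTerm a c) atTop (𝓝 (exp (a * c))) := by
  have harg := (tendsto_div_two_sqrt_atTop a).add_atTop (tendsto_sqrt_atTop.const_mul_atTop hc)
  have h := (tendsto_erf_atTop.comp harg).const_mul (exp (a * c))
  rwa [mul_one] at h

theorem tendsto_erfTerm_atTop_of_neg (a : ℝ) (hc : c < 0) :
    Tendsto (erfTerm a c) atTop (𝓝 (-exp (a * c))) := by
  have harg := (tendsto_div_two_sqrt_atTop a).add_atBot
    (tendsto_sqrt_atTop.const_mul_atTop_of_neg hc)
  have h := (tendsto_erf_atBot.comp harg).const_mul (exp (a * c))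
  rwa [mul_neg_one] at h

end

noncomputable def levyDensity (a t : ℝ) : ℝ :=
  a / (2 * √π * t ^ ((3 : ℝ) / 2)) * exp (-a ^ 2 / (4 * t))

noncomputable def levyPrimitive (a b t : ℝ) : ℝ := -(erfTerm a (-b) t + erfTerm a b t) / 2

theorem rpow_three_halves {t : ℝ} (ht : 0 ≤ t) : t ^ ((3 : ℝ) / 2) = t * √t := by
  rw [show (3 : ℝ) / 2 = 1 + 1 / 2 by norm_num, rpow_add' ht (by norm_num), rpow_one, sqrt_eq_rpow]

theorem hasDerivAt_levyPrimitive (a b : ℝ) {t : ℝ} (ht : 0 < t) :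
    HasDerivAt (levyPrimitive a b) (exp (-b ^ 2 * t) * levyDensity a t) t := by
  refine (((hasDerivAt_erfTerm ht).add (hasDerivAt_erfTerm ht)).neg.div_const 2).congr_deriv ?_
  have : √t ≠ 0 := (sqrt_pos.2 ht).ne'
  rw [levyDensity, rpow_three_halves ht.le, neg_sq]
  field_simp
  ring

theorem levyDensity_nonneg {a t : ℝ} (ha : 0 ≤ a) (ht : 0 ≤ t) : 0 ≤ levyDensity a t := by
  unfold levyDensity
  positivity

theorem tendsto_levyPrimitive_nhdsGT {a : ℝ} (ha : 0 < a) (b : ℝ) :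
    Tendsto (levyPrimitive a b) (𝓝[>] 0) (𝓝 (-(exp (-(a * b)) + exp (a * b)) / 2)) := by
  have h := ((tendsto_erfTerm_nhdsGT ha (-b)).add (tendsto_erfTerm_nhdsGT ha b)).neg.div_const 2
  rwa [mul_neg] at h

theorem tendsto_levyPrimitive_atTop (a : ℝ) {b : ℝ} (hb : 0 < b) :
    Tendsto (levyPrimitive a b) atTop (𝓝 (-(-exp (-(a * b)) + exp (a * b)) / 2)) := by
  have h := ((tendsto_erfTerm_atTop_of_neg a (neg_neg_of_pos hb)).add
    (tendsto_erfTerm_atTop_of_pos a hb)).neg.div_const 2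
  rwa [mul_neg] at h

theorem stmt_3 (a s : ℝ) (ha : 0 < a) (hs : 0 < s) :
    ∫ t in Set.Ioi (0 : ℝ),
        Real.exp (-s * t) * ((a / (2 * Real.sqrt Real.pi * t ^ ((3 : ℝ) / 2))) *
          Real.exp (-a ^ 2 / (4 * t))) =
      Real.exp (-a * Real.sqrt s) := by
  have hprimitive : ∀ t ∈ Ioi (0 : ℝ),
      HasDerivAt (levyPrimitive a √s) (exp (-s * t) * levyDensity a t) t := by
    intro t ht
    have h := hasDerivAt_levyPrimitive a √s ht
    rwa [sq_sqrt hs.le] at h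
  change ∫ t in Ioi 0, exp (-s * t) * levyDensity a t = _
  rw [integral_Ioi_of_hasDerivAt_of_nonneg_of_tendsto hprimitive
    (fun t ht => mul_nonneg (exp_pos _).le (levyDensity_nonneg ha.le (le_of_lt ht)))
    (tendsto_levyPrimitive_nhdsGT ha √s) (tendsto_levyPrimitive_atTop a (sqrt_pos.2 hs)), neg_mul]
  ring
end

section
/- For all a > 0 and s > 0, ∫₀^∞ e^{−s t} · e^{−a²/(4t)} / √(π t) dt = e^{−a √s} / √s. -/
/-!
Substituting `t = u ^ 2` and completing the square,
`s u ^ 2 + a ^ 2 / (4 u ^ 2) = (√s u - a / (2 u)) ^ 2 + a √s`, reduce the claim to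
`∫₀^∞ exp (-(b u - c / u) ^ 2) du = √π / (2 b)` with `b = √s`, `c = a / 2`.
This is the Cauchy–Schlömilch transformation: `u ↦ b u - c / u` maps `(0, ∞)` bijectively
onto `ℝ` with Jacobian `b + c / u ^ 2`, and the involution `u ↦ c / (b u)` reverses its sign
while turning the part `c / u ^ 2` of the Jacobian into `b`. Hence
`∫₀^∞ g (b u - c / u) du = (2 b)⁻¹ ∫ g` for every even integrable `g`; take `g` Gaussian.
-/

open MeasureTheory Set Real

theorem hasDerivAt_mul_sub_div (b c : ℝ) {x : ℝ} (hx : x ≠ 0) :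
    HasDerivAt (fun u : ℝ => b * u - c / u) (b + c / x ^ 2) x := by
  have := ((hasDerivAt_id' x).const_mul b).sub ((hasDerivAt_inv hx).const_mul c)
  simp only [← div_eq_mul_inv] at this
  exact this.congr_deriv (by ring)

section

variable {E : Type*} [NormedAddCommGroup E] [NormedSpace ℝ E] {b c : ℝ}

theorem strictMonoOn_mul_sub_div_Ioi (hb : 0 < b) (hc : 0 < c) :
    StrictMonoOn (fun u : ℝ => b * u - c / u) (Ioi 0) := fun _ hx _ _ hxy =>
  sub_lt_sub (mul_lt_mul_of_pos_left hxy hb) (div_lt_div_of_pos_left hc hx hxy)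

theorem image_mul_sub_div_Ioi (hb : 0 < b) (hc : 0 < c) :
    (fun u : ℝ => b * u - c / u) '' Ioi 0 = univ := by
  refine eq_univ_of_forall fun y => ?_
  set r := √(y ^ 2 + 4 * b * c)
  have hr : r ^ 2 = y ^ 2 + 4 * b * c := sq_sqrt (by positivity)
  have hyr : 0 < y + r := by
    have : |y| < r := by
      rw [← sqrt_sq_eq_abs]; exact sqrt_lt_sqrt (sq_nonneg y) (by nlinarith)
    linarith [neg_abs_le y]
  -- `u` is the positive root of `b u ^ 2 - y u - c`
  set u := (y + r) / (2 * b)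
  have hu : 0 < u := by positivity
  have hcu : c / u = (r - y) / 2 := by
    rw [div_eq_iff hu.ne']
    simp only [u]
    field_simp
    linear_combination -hr
  refine ⟨u, hu, ?_⟩
  simp only [hcu, u]
  field_simp
  ring

theorem integral_comp_div_Ioi (h : ℝ → E) {k : ℝ} (hk : 0 < k) :
    ∫ u in Ioi 0, (k / u ^ 2) • h (k / u) = ∫ u in Ioi 0, h u := by
  have himage : (fun u : ℝ => k / u) '' Ioi 0 = Ioi 0 := by
    refine (image_subset_iff.2 fun u hu => div_pos hk hu).antisymm fun v hv => ?_
    exact ⟨k / v, div_pos hk hv, div_div_cancel₀ hk.ne'⟩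
  have hderiv : ∀ x ∈ Ioi (0 : ℝ),
      HasDerivWithinAt (fun u => k / u) (-(k / x ^ 2)) (Ioi 0) x := fun x hx => by
    simpa [div_eq_mul_inv] using ((hasDerivAt_inv (ne_of_gt hx)).const_mul k).hasDerivWithinAt
  have hinj : InjOn (fun u : ℝ => k / u) (Ioi 0) := fun x _ y _ hxy => by
    simpa [div_eq_mul_inv, hk.ne'] using hxy
  conv_rhs =>
    rw [← himage, integral_image_eq_integral_abs_deriv_smul measurableSet_Ioi hderiv hinj]
  refine setIntegral_congr_fun measurableSet_Ioi fun u hu => ?_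
  rw [abs_neg, abs_of_pos (div_pos hk (pow_pos hu 2))]

theorem integral_comp_sq_Ioi (g : ℝ → E) :
    ∫ u in Ioi 0, (2 * u) • g (u ^ 2) = ∫ t in Ioi 0, g t := by
  simpa [show (2 : ℝ) - 1 = 1 by norm_num] using integral_comp_rpow_Ioi_of_pos (g := g) two_pos

theorem integral_comp_mul_sub_div_Ioi_smul_deriv (g : ℝ → E) (hb : 0 < b) (hc : 0 < c) :
    ∫ u in Ioi 0, (b + c / u ^ 2) • g (b * u - c / u) = ∫ x, g x := by
  conv_rhs => rw [← setIntegral_univ, ← image_mul_sub_div_Ioi hb hc,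
    integral_image_eq_integral_abs_deriv_smul measurableSet_Ioi
      (fun x hx => (hasDerivAt_mul_sub_div b c (ne_of_gt hx)).hasDerivWithinAt)
      (strictMonoOn_mul_sub_div_Ioi hb hc).injOn]
  refine setIntegral_congr_fun measurableSet_Ioi fun u _ => ?_
  rw [abs_of_pos (by positivity)]

theorem integrableOn_comp_mul_sub_div_Ioi_smul_deriv {g : ℝ → E} (hg : Integrable g)
    (hb : 0 < b) (hc : 0 < c) :
    IntegrableOn (fun u => (b + c / u ^ 2) • g (b * u - c / u)) (Ioi 0) := by
  rw [← integrableOn_univ, ← image_mul_sub_div_Ioi hb hc] at hg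
  refine ((integrableOn_image_iff_integrableOn_abs_deriv_smul measurableSet_Ioi
      (fun x hx => (hasDerivAt_mul_sub_div b c (ne_of_gt hx)).hasDerivWithinAt)
      (strictMonoOn_mul_sub_div_Ioi hb hc).injOn g).1 hg).congr_fun
    (fun u _ => ?_) measurableSet_Ioi
  simp only [abs_of_pos (by positivity : 0 < b + c / u ^ 2)]

theorem integrableOn_comp_mul_sub_div_Ioi {g : ℝ → E} (hg : Integrable g)
    (hb : 0 < b) (hc : 0 < c) :
    IntegrableOn (fun u => g (b * u - c / u)) (Ioi 0) := by
  have hpos : ∀ u : ℝ, 0 < b + c / u ^ 2 := fun u => by positivity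
  have hφ : Measurable fun u : ℝ => (b + c / u ^ 2)⁻¹ := by fun_prop
  refine ((integrableOn_comp_mul_sub_div_Ioi_smul_deriv hg hb hc).bdd_smul b⁻¹
    hφ.aestronglyMeasurable (ae_of_all _ fun u => ?_)).congr (ae_of_all _ fun u => ?_)
  · rw [norm_inv, norm_of_nonneg (hpos u).le]
    exact inv_anti₀ hb (le_add_of_nonneg_right (by positivity))
  · simp [smul_smul, inv_mul_cancel₀ (hpos u).ne']

theorem integral_comp_mul_sub_div_Ioi {g : ℝ → E} (hg : Integrable g)
    (hg_even : ∀ x, g (-x) = g x) (hb : 0 < b) (hc : 0 < c) :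
    ∫ u in Ioi 0, g (b * u - c / u) = (2 * b)⁻¹ • ∫ x, g x := by
  set I := ∫ u in Ioi 0, g (b * u - c / u)
  have hbI : IntegrableOn (fun u => b • g (b * u - c / u)) (Ioi 0) :=
    (integrableOn_comp_mul_sub_div_Ioi hg hb hc).smul b
  have hJ : IntegrableOn (fun u => (c / u ^ 2) • g (b * u - c / u)) (Ioi 0) := by
    refine ((integrableOn_comp_mul_sub_div_Ioi_smul_deriv hg hb hc).sub hbI).congr
      (ae_of_all _ fun u => ?_)
    simp [add_smul]
  have hJI : ∫ u in Ioi 0, (c / u ^ 2) • g (b * u - c / u) = b • I := by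
    rw [← integral_comp_div_Ioi _ (div_pos hc hb), ← integral_smul]
    refine setIntegral_congr_fun measurableSet_Ioi fun u hu => ?_
    have hu : u ≠ 0 := ne_of_gt hu
    have hneg : b * (c / b / u) - c / (c / b / u) = -(b * u - c / u) := by
      field_simp
      ring
    have hcoeff : c / b / u ^ 2 * (c / (c / b / u) ^ 2) = b := by
      field_simp
    rw [hneg, hg_even, smul_smul, hcoeff]
  have h2I : ∫ x, g x = (2 * b) • I := by
    rw [← integral_comp_mul_sub_div_Ioi_smul_deriv g hb hc]
    simp_rw [add_smul]
    rw [integral_add hbI hJ, integral_smul, hJI, two_mul, add_smul]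
  rw [h2I, smul_smul, inv_mul_cancel₀ (by positivity), one_smul]

end

theorem integral_exp_neg_mul_sub_div_sq_Ioi {b c : ℝ} (hb : 0 < b) (hc : 0 < c) :
    ∫ u in Ioi 0, exp (-(b * u - c / u) ^ 2) = √π / (2 * b) := by
  have hgauss : ∫ x : ℝ, exp (-x ^ 2) = √π := by simpa using integral_gaussian 1
  have hint : Integrable fun x : ℝ => exp (-x ^ 2) := by
    simpa using integrable_exp_neg_mul_sq one_pos
  rw [integral_comp_mul_sub_div_Ioi hint (by simp) hb hc, hgauss, smul_eq_mul, div_eq_inv_mul]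

theorem mul_exp_mul_exp_div_sqrt_eq {a s u : ℝ} (hs : 0 ≤ s) (hu : 0 < u) :
    2 * u * (exp (-s * u ^ 2) * (exp (-a ^ 2 / (4 * u ^ 2)) / √(π * u ^ 2))) =
      2 / √π * exp (-a * √s) * exp (-(√s * u - a / 2 / u) ^ 2) := by
  have hsqrt : √(π * u ^ 2) = √π * u := by rw [sqrt_mul pi_pos.le, sqrt_sq hu.le]
  have hsquare : -s * u ^ 2 + -a ^ 2 / (4 * u ^ 2) = -a * √s + -(√s * u - a / 2 / u) ^ 2 := by
    have := sq_sqrt hs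
    field_simp
    linear_combination (16 * u ^ 4) * this
  rw [hsqrt, mul_assoc _ (exp _), ← exp_add, ← hsquare, exp_add]
  field_simp

theorem stmt_4 (a s : ℝ) (ha : 0 < a) (hs : 0 < s) :
    ∫ t in Set.Ioi (0 : ℝ),
        Real.exp (-s * t) * (Real.exp (-a ^ 2 / (4 * t)) / Real.sqrt (Real.pi * t)) =
      Real.exp (-a * Real.sqrt s) / Real.sqrt s := by
  rw [← integral_comp_sq_Ioi]
  simp only [smul_eq_mul]
  rw [setIntegral_congr_fun measurableSet_Ioi fun u hu => mul_exp_mul_exp_div_sqrt_eq hs.le hu,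
    integral_const_mul, integral_exp_neg_mul_sub_div_sq_Ioi (sqrt_pos.2 hs) (half_pos ha)]
  have := sqrt_pos.2 pi_pos
  field_simp
end

section
/- For all a > 0 and t > 0, Σ_{j=0}^∞ (−1)^j (a^{2j+1} / (2j+1)!) · Γ(j + 3/2) / t^{j+3/2} = (√π a / (2 t^{3/2})) e^{−a²/(4t)}, the series converging absolutely. -/
open Real

lemma gamma_half (j : ℕ) :
    Real.Gamma ((j : ℝ) + 3/2) =
      Real.sqrt Real.pi * (Nat.factorial (2 * j + 1)) / (2 * 4 ^ j * Nat.factorial j) := by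
  induction j with
  | zero =>
      have : ((0 : ℕ) : ℝ) + 3/2 = 1/2 + 1 := by norm_num
      rw [this, Real.Gamma_add_one (by norm_num), Real.Gamma_one_half_eq]
      norm_num
      ring
  | succ n ih =>
      have h1 : ((n + 1 : ℕ) : ℝ) + 3/2 = ((n : ℝ) + 3/2) + 1 := by push_cast; ring
      rw [h1, Real.Gamma_add_one (by positivity), ih]
      have h2 : ((Nat.factorial (2 * (n + 1) + 1) : ℝ)) =
          (2 * (n : ℝ) + 3) * ((2 * n + 2) * Nat.factorial (2 * n + 1)) := by
        have : 2 * (n + 1) + 1 = (2 * n + 1) + 1 + 1 := by ring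
        rw [this, Nat.factorial_succ, Nat.factorial_succ]; push_cast; ring
      have h3 : ((Nat.factorial (n + 1) : ℝ)) = ((n : ℝ) + 1) * Nat.factorial n := by
        rw [Nat.factorial_succ]; push_cast; ring
      rw [h2, h3]
      have hn : (Nat.factorial n : ℝ) ≠ 0 := Nat.cast_ne_zero.mpr n.factorial_ne_zero
      have h4 : (4 : ℝ) ^ n ≠ 0 := by positivity
      have hn1 : ((n : ℝ) + 1) ≠ 0 := by positivity
      field_simp
      ring

theorem stmt_18 (a t : ℝ) (ha : 0 < a) (ht : 0 < t) :
    Summable (fun j : ℕ =>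
        |(-1 : ℝ) ^ j * (a ^ (2 * j + 1) / (Nat.factorial (2 * j + 1))) *
          Real.Gamma ((j : ℝ) + 3/2) / t ^ ((j : ℝ) + 3/2)|) ∧
      (∑' j : ℕ, (-1 : ℝ) ^ j * (a ^ (2 * j + 1) / (Nat.factorial (2 * j + 1))) *
          Real.Gamma ((j : ℝ) + 3/2) / t ^ ((j : ℝ) + 3/2)) =
        (Real.sqrt Real.pi * a / (2 * t ^ ((3 : ℝ)/2))) * Real.exp (-a ^ 2 / (4 * t)) := by
  set C : ℝ := Real.sqrt Real.pi * a / (2 * t ^ ((3 : ℝ)/2)) with hC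
  set x : ℝ := -a ^ 2 / (4 * t) with hx
  have hfeq : ∀ j : ℕ, (-1 : ℝ) ^ j * (a ^ (2 * j + 1) / (Nat.factorial (2 * j + 1))) *
      Real.Gamma ((j : ℝ) + 3/2) / t ^ ((j : ℝ) + 3/2) =
      C * (x ^ j / Nat.factorial j) := by
    intro j
    rw [gamma_half j]
    have ht32 : t ^ ((j : ℝ) + 3/2) = t ^ j * t ^ ((3 : ℝ)/2) := by
      rw [Real.rpow_add ht, Real.rpow_natCast]
    rw [ht32, hC, hx]
    have hfac : ((Nat.factorial (2 * j + 1) : ℝ)) ≠ 0 :=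
      Nat.cast_ne_zero.mpr (Nat.factorial_ne_zero _)
    have hfacj : ((Nat.factorial j : ℝ)) ≠ 0 := Nat.cast_ne_zero.mpr j.factorial_ne_zero
    have htj : (t : ℝ) ^ j ≠ 0 := by positivity
    have ht32' : t ^ ((3 : ℝ)/2) ≠ 0 := by positivity
    have hxpow : (-a ^ 2 / (4 * t)) ^ j = (-1) ^ j * a ^ (2 * j) / (4 ^ j * t ^ j) := by
      rw [div_pow, mul_pow, neg_pow, pow_mul]
    rw [hxpow]
    field_simp
    ring
  constructor
  · have hs : Summable (fun j : ℕ => |C| * (|x| ^ j / Nat.factorial j)) :=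
      (Real.summable_pow_div_factorial |x|).mul_left _
    refine hs.congr fun j => ?_
    rw [hfeq j]; simp [abs_mul, abs_div, abs_pow]
  · rw [tsum_congr hfeq, tsum_mul_left]
    congr 1
    rw [Real.exp_eq_exp_ℝ, NormedSpace.exp_eq_tsum_div]
end
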